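/- arXiv:1511.01733 — 5 statements merged into one kernel-verified Lean document; each statement's English description precedes it below -/
import Mathlib

section
/- Let F be an uncountable algebraically closed field, A a unital associative F-algebra of countable dimension, M a simple left A-module, and x a central element of A. Then there exists λ ∈ F such that x·m = λ·m for all m ∈ M (x acts on M by a scalar). -/
/-!
Multiplication by a central element `x` is an `A`-linear endomorphism of `M`, so by Schur's lemma
each `x - c` acts on `M` bijectively or by zero. Being cyclic, `M` has countable dimension over `F`.
If every `x - c` acted bijectively, the uncountably many vectors `(x - c)⁻¹ m` would be linearly
dependent; clearing denominators yields a nonzero polynomial `p` with `p(x) m = 0`, whereas `p(x)`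
is invertible because `p` splits into linear factors over the algebraically closed field `F`.
-/

universe u v

open Polynomial Cardinal

theorem not_linearIndependent_of_rank_le_aleph0 {R V ι : Type*} [Semiring R] [Nontrivial R]
    [AddCommMonoid V] [Module R V] [Uncountable ι] (hV : Module.rank R V ≤ ℵ₀) (w : ι → V) :
    ¬LinearIndependent R w := fun hw ↦ by
  have := hw.cardinal_lift_le_rank.trans (lift_le.mpr hV)
  rw [lift_aleph0, lift_le_aleph0] at this
  exact this.not_gt aleph0_lt_mk

section

variable {F B : Type*} [Field F] [Ring B] [Algebra F B]

theorem spectrum.isUnit_aeval_of_eq_empty [IsAlgClosed F] {b : B} (hb : spectrum F b = ∅)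
    {p : F[X]} (hp : p ≠ 0) : IsUnit (aeval b p) := by
  rcases le_or_gt p.degree 0 with hdeg | hdeg
  · rw [eq_C_of_degree_le_zero hdeg, aeval_C]
    exact (isUnit_iff_ne_zero.mpr fun h ↦ hp (by rw [eq_C_of_degree_le_zero hdeg, h, C_0])).map _
  · rw [← spectrum.zero_notMem_iff F, spectrum.map_polynomial_aeval_of_degree_pos b p hdeg, hb,
      Set.image_empty]
    exact Set.notMem_empty 0

variable [DecidableEq F]

/-- Clearing denominators in `∑ i ∈ s, g i / (i - X)` gives this polynomial over
`∏ j ∈ s, (j - X)`. -/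
noncomputable def Polynomial.partialFractionNumerator (s : Finset F) (g : F → F) : F[X] :=
  ∑ i ∈ s, C (g i) * ∏ j ∈ s.erase i, (C j - X)

theorem Polynomial.eval_partialFractionNumerator {s : Finset F} {i : F} (hi : i ∈ s) (g : F → F) :
    (partialFractionNumerator s g).eval i = g i * ∏ j ∈ s.erase i, (j - i) := by
  rw [partialFractionNumerator, eval_finsetSum, Finset.sum_eq_single_of_mem i hi]
  · simp [eval_prod]
  · intro k hk hki
    rw [eval_mul, eval_prod, Finset.prod_eq_zero (Finset.mem_erase.mpr ⟨hki.symm, hi⟩) (by simp),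
      mul_zero]

theorem Polynomial.partialFractionNumerator_ne_zero {s : Finset F} {g : F → F} {i : F}
    (hi : i ∈ s) (hg : g i ≠ 0) : partialFractionNumerator s g ≠ 0 := fun h ↦ by
  have := eval_partialFractionNumerator hi g
  rw [h, eval_zero, eq_comm] at this
  refine mul_ne_zero hg (Finset.prod_ne_zero_iff.mpr fun j hj ↦ ?_) this
  exact sub_ne_zero.mpr (Finset.ne_of_mem_erase hj)

theorem Polynomial.aeval_partialFractionNumerator (b : B) {s : Finset F} (g : F → F)
    (hs : ∀ i ∈ s, i ∉ spectrum F b) :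
    aeval b (partialFractionNumerator s g) =
      aeval b (∏ j ∈ s, (C j - X)) * ∑ i ∈ s, g i • resolvent b i := by
  rw [partialFractionNumerator, map_sum, Finset.mul_sum]
  refine Finset.sum_congr rfl fun i hi ↦ ?_
  have hinv : aeval b (C i - X) * resolvent b i = 1 := by
    rw [map_sub, aeval_C, aeval_X]
    exact Ring.mul_inverse_cancel _ (spectrum.notMem_iff.mp (hs i hi))
  rw [mul_smul_comm, ← Finset.prod_erase_mul s _ hi, map_mul (aeval b) _ (C i - X), mul_assoc,
    hinv, mul_one, map_mul, aeval_C, Algebra.smul_def]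

end

theorem Module.End.spectrum_nonempty_of_rank_le_aleph0 {F V : Type*} [Field F] [IsAlgClosed F]
    [Uncountable F] [AddCommGroup V] [Module F V] [Nontrivial V] (hV : Module.rank F V ≤ ℵ₀)
    (T : Module.End F V) : (spectrum F T).Nonempty := by
  classical
  by_contra hT
  rw [Set.not_nonempty_iff_eq_empty] at hT
  obtain ⟨v, hv⟩ := exists_ne (0 : V)
  have hdep := not_linearIndependent_of_rank_le_aleph0 hV fun c : F ↦ resolvent T c v
  rw [linearIndependent_iff'] at hdep
  push Not at hdep
  obtain ⟨s, g, hsum, i, hi, hgi⟩ := hdep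
  have hp : aeval T (partialFractionNumerator s g) v = 0 := by
    rw [aeval_partialFractionNumerator T g fun c _ ↦ hT ▸ Set.notMem_empty c, Module.End.mul_apply,
      LinearMap.sum_apply]
    simp only [LinearMap.smul_apply, hsum, map_zero]
  have hunit := spectrum.isUnit_aeval_of_eq_empty hT (partialFractionNumerator_ne_zero hi hgi)
  exact hv (((Module.End.isUnit_iff _).mp hunit).injective (by rwa [map_zero]))

theorem IsSimpleModule.lift_rank_le {F : Type*} {A : Type u} {M : Type v} [Field F] [Ring A]
    [Algebra F A] [AddCommGroup M] [Module A M] [Module F M] [IsScalarTower F A M]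
    [IsSimpleModule A M] : lift.{u} (Module.rank F M) ≤ lift.{v} (Module.rank F A) := by
  have := IsSimpleModule.nontrivial A M
  obtain ⟨m, hm⟩ := exists_ne (0 : M)
  exact ((LinearMap.toSpanSingleton A M m).restrictScalars F).lift_rank_le_of_surjective
    (IsSimpleModule.toSpanSingleton_surjective A hm)

theorem IsSimpleModule.exists_smul_eq_smul_of_mem_center {F A M : Type*} [Field F] [IsAlgClosed F]
    [Uncountable F] [Ring A] [Algebra F A] [AddCommGroup M] [Module A M] [Module F M]
    [IsScalarTower F A M] [IsSimpleModule A M] (hM : Module.rank F M ≤ ℵ₀) {x : A}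
    (hx : x ∈ Set.center A) : ∃ c : F, ∀ m : M, x • m = c • m := by
  have := IsSimpleModule.nontrivial A M
  obtain ⟨c, hc⟩ := Module.End.spectrum_nonempty_of_rank_le_aleph0 hM
    ((Module.End.smulLeft (M := M) x hx).restrictScalars F)
  have hcx : algebraMap F A c - x ∈ Set.center A :=
    (Subring.center A).sub_mem (Set.algebraMap_mem_center c) hx
  rcases (Module.End.smulLeft (M := M) _ hcx).bijective_or_eq_zero with hbij | hzero
  · refine absurd ((Module.End.isUnit_iff _).mpr ?_) (spectrum.mem_iff.mp hc)
    convert hbij using 1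
    ext m
    simp [sub_smul]
  · exact ⟨c, fun m ↦ by simpa [sub_smul, sub_eq_zero, eq_comm] using LinearMap.congr_fun hzero m⟩

/-- Dixmier's lemma: let `F` be an uncountable algebraically closed field, `A` a unital
associative `F`-algebra of countable dimension, `M` a simple left `A`-module, and `x` a
central element of `A`. Then there exists `λ ∈ F` such that `x` acts on `M` by the
scalar `λ`. -/
theorem central_element_acts_by_scalar {F A M : Type*} [Field F] [Uncountable F]
    [IsAlgClosed F] [Ring A] [Algebra F A]
    (hdim : Module.rank F A ≤ Cardinal.aleph0)
    [AddCommGroup M] [Module A M] [IsSimpleModule A M]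
    (x : A) (hx : ∀ a : A, x * a = a * x) :
    ∃ c : F, ∀ m : M, x • m = algebraMap F A c • m := by
  let _ : Module F M := Module.compHom M (algebraMap F A)
  have : IsScalarTower F A M := ⟨fun c a m ↦ by rw [Algebra.smul_def, mul_smul]; rfl⟩
  have hM : Module.rank F M ≤ ℵ₀ := by
    simpa using IsSimpleModule.lift_rank_le.trans (lift_le.mpr hdim)
  exact IsSimpleModule.exists_smul_eq_smul_of_mem_center hM
    (Subring.mem_center_iff.mpr fun a ↦ (hx a).symm)
end

section
/- Let z ∈ Z_m and z′ ∈ Z_{m′} be strictly increasing sequences of nonnegative integers of lengths m+1 and m′+1, with associated partitions p = p(z), p′ = p(z′), and set Δm = m − m′. Define ⟨z, z′⟩ = {2z₀, …, 2z_m} ∪ {2z′₀+1, …, 2z′_{m′}+1} ∈ Z_{m+m′+1}, and ⟨p, p′⟩_{Δm} = p(⟨z, z′⟩). Then the number of parts satisfies #⟨p, p′⟩_{Δm} = max(2·#p − Δm, 2·#p′ + Δm − 1). -/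
lemma sm_le {n : ℕ} {f : Fin n → ℕ} (hf : StrictMono f) : ∀ i : Fin n, (i : ℕ) ≤ f i := by
  have H : ∀ K : ℕ, ∀ i : Fin n, (i : ℕ) ≤ K → (i : ℕ) ≤ f i := by
    intro K
    induction K with
    | zero => intro i h; omega
    | succ K ih =>
      intro i h
      rcases Nat.lt_or_ge (i : ℕ) (K + 1) with h' | h'
      · exact ih i (by omega)
      · have hival : (i : ℕ) = K + 1 := by omega
        have hK : K < n := by omega
        have h1 := ih ⟨K, hK⟩ le_rfl
        have h2 : f ⟨K, hK⟩ < f i := hf (by rw [Fin.lt_def]; show K < (i : ℕ); omega)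
        simp only at h1
        omega
  exact fun i => H (i : ℕ) i le_rfl

lemma sm_fixed_iff {n : ℕ} {f : Fin n → ℕ} (hf : StrictMono f) (k : Fin n) :
    f k = (k : ℕ) ↔ ∀ s : ℕ, s ≤ (k : ℕ) → ∃ i, f i = s := by
  constructor
  · intro hk s hs
    have surj := Finset.surj_on_of_inj_on_of_card_le
      (s := Finset.Iic k) (t := Finset.Iic (k : ℕ))
      (fun i _ => f i)
      (fun i hi => by
        simp only [Finset.mem_Iic] at hi ⊢
        calc f i ≤ f k := hf.monotone hi
        _ = k := hk)
      (fun i j _ _ hij => hf.injective hij)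
      (by simp [Nat.card_Iic, Fin.card_Iic])
    obtain ⟨i, _, hi⟩ := surj s (Finset.mem_Iic.mpr hs)
    exact ⟨i, hi.symm⟩
  · intro h
    choose g hg using h
    have surj := Finset.surj_on_of_inj_on_of_card_le
      (s := Finset.Iic (k : ℕ)) (t := Finset.Iic k)
      (fun s hs => g s (Finset.mem_Iic.mp hs))
      (fun s hs => by
        have h1 := sm_le hf (g s (Finset.mem_Iic.mp hs))
        have h2 := hg s (Finset.mem_Iic.mp hs)
        simp only [Finset.mem_Iic] at hs ⊢
        rw [Fin.le_def]
        omega)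
      (fun s t hs ht hst => by
        have h1 := hg s (Finset.mem_Iic.mp hs)
        have h2 := hg t (Finset.mem_Iic.mp ht)
        rw [hst] at h1
        rw [← h1]; exact h2)
      (by simp [Nat.card_Iic, Fin.card_Iic])
    obtain ⟨s, hsmem, hs⟩ := surj k (Finset.mem_Iic.mpr le_rfl)
    have h1 := hg s (Finset.mem_Iic.mp hsmem)
    rw [← hs] at h1
    have h2 := sm_le hf k
    simp only [Finset.mem_Iic] at hsmem
    omega

lemma sm_fixed_lt {n : ℕ} {f : Fin n → ℕ} (hf : StrictMono f) (k : Fin n) :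
    f k = (k : ℕ) ↔ (k : ℕ) < (Finset.univ.filter fun i : Fin n => f i = (i : ℕ)).card := by
  constructor
  · intro hk
    have hsub : Finset.Iic k ⊆ Finset.univ.filter fun i : Fin n => f i = (i : ℕ) := by
      intro j hj
      simp only [Finset.mem_Iic] at hj
      simp only [Finset.mem_filter, Finset.mem_univ, true_and]
      exact (sm_fixed_iff hf j).mpr
        (fun s hs => (sm_fixed_iff hf k).mp hk s (le_trans hs (Fin.le_def.mp hj)))
    have := Finset.card_le_card hsub
    rw [Fin.card_Iic] at this
    omega
  · intro hk
    by_contra hne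
    have hsub : (Finset.univ.filter fun i : Fin n => f i = (i : ℕ)) ⊆ Finset.Iio k := by
      intro j hj
      simp only [Finset.mem_filter, Finset.mem_univ, true_and] at hj
      simp only [Finset.mem_Iio]
      by_contra hjk
      push_neg at hjk
      exact hne ((sm_fixed_iff hf k).mpr
        (fun s hs => (sm_fixed_iff hf j).mp hj s (le_trans hs (Fin.le_def.mp hjk))))
    have := Finset.card_le_card hsub
    rw [Fin.card_Iio] at this
    omega

/-- Let `z ∈ Z_m`, `z′ ∈ Z_{m′}` be strictly increasing sequences of nonnegative
integers, with associated partitions `p = p(z)`, `p′ = p(z′)` (parts `z i − i`, zeros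
deleted), and `Δm = m − m′`.  Let `w = ⟨z, z′⟩` be the increasing enumeration of
`{2z₀, …, 2z_m} ∪ {2z′₀+1, …, 2z′_{m′}+1}`, and `⟨p, p′⟩_{Δm} = p(w)`.  Then
`#⟨p, p′⟩_{Δm} = max (2·#p − Δm) (2·#p′ + Δm − 1)`.
Here `#p(z)` is the number of indices `i` with `z i − i > 0`. -/
theorem card_bracket_partition (m m' : ℕ)
    (z : Fin (m + 1) → ℕ) (z' : Fin (m' + 1) → ℕ)
    (hz : StrictMono z) (hz' : StrictMono z')
    (w : Fin (m + m' + 2) → ℕ) (hw : StrictMono w)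
    (hrange : Set.range w
      = (Set.range fun i => 2 * z i) ∪ (Set.range fun j => 2 * z' j + 1)) :
    ((Finset.univ.filter fun k : Fin (m + m' + 2) => (k : ℕ) < w k).card : ℤ)
      = max (2 * ((Finset.univ.filter fun i : Fin (m + 1) => (i : ℕ) < z i).card : ℤ)
              - ((m : ℤ) - m'))
            (2 * ((Finset.univ.filter fun j : Fin (m' + 1) => (j : ℕ) < z' j).card : ℤ)
              + ((m : ℤ) - m') - 1) := by
  classical
  set a := (Finset.univ.filter fun i : Fin (m + 1) => z i = (i : ℕ)).card with ha_def
  set b := (Finset.univ.filter fun j : Fin (m' + 1) => z' j = (j : ℕ)).card with hb_def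
  set c := (Finset.univ.filter fun k : Fin (m + m' + 2) => w k = (k : ℕ)).card with hc_def
  have ha_le : a ≤ m + 1 := by
    have := Finset.card_filter_le (Finset.univ : Finset (Fin (m + 1)))
      (fun i => z i = (i : ℕ))
    simpa using this
  have hb_le : b ≤ m' + 1 := by
    have := Finset.card_filter_le (Finset.univ : Finset (Fin (m' + 1)))
      (fun j => z' j = (j : ℕ))
    simpa using this
  have hc_le : c ≤ m + m' + 2 := by
    have := Finset.card_filter_le (Finset.univ : Finset (Fin (m + m' + 2)))
      (fun k => w k = (k : ℕ))
    simpa using this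
  have hrange' : ∀ s : ℕ, (∃ i, w i = s) ↔ ((∃ i, 2 * z i = s) ∨ (∃ j, 2 * z' j + 1 = s)) := by
    intro s
    have := Set.ext_iff.mp hrange s
    simpa [Set.mem_range] using this
  set M := min (2 * a) (2 * b + 1) with hM_def
  have hM_le : M ≤ a + b := by omega
  -- all s < M are in the range of w
  have key1 : ∀ s : ℕ, s < M → ∃ i, w i = s := by
    intro s hs
    rcases Nat.even_or_odd s with ⟨t, ht⟩ | ⟨t, ht⟩
    · have htlt : t < a := by omega
      have hzt : z ⟨t, by omega⟩ = t := by
        rw [sm_fixed_lt hz ⟨t, by omega⟩]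
        exact htlt
      exact (hrange' s).mpr (Or.inl ⟨⟨t, by omega⟩, by rw [hzt]; omega⟩)
    · have htlt : t < b := by omega
      have hzt : z' ⟨t, by omega⟩ = t := by
        rw [sm_fixed_lt hz' ⟨t, by omega⟩]
        exact htlt
      exact (hrange' s).mpr (Or.inr ⟨⟨t, by omega⟩, by rw [hzt]; omega⟩)
  -- M itself is not in the range of w
  have key2 : ¬ ∃ i, w i = M := by
    intro ⟨i, hi⟩
    rcases (hrange' M).mp ⟨i, hi⟩ with ⟨i0, hi0⟩ | ⟨j0, hj0⟩
    · rcases le_or_gt (2 * a) (2 * b + 1) with hab | hab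
      · have hMa : M = 2 * a := by omega
        have hzi : z i0 = a := by omega
        have h1 := sm_le hz i0
        by_cases h2 : (i0 : ℕ) < a
        · have := (sm_fixed_lt hz i0).mpr h2
          omega
        · have : ¬ z i0 = (i0 : ℕ) := fun hfix => h2 ((sm_fixed_lt hz i0).mp hfix)
          omega
      · have : M = 2 * b + 1 := by omega
        omega
    · rcases le_or_gt (2 * a) (2 * b + 1) with hab | hab
      · have : M = 2 * a := by omega
        omega
      · have hMb : M = 2 * b + 1 := by omega
        have hzj : z' j0 = b := by omega
        have h1 := sm_le hz' j0
        by_cases h2 : (j0 : ℕ) < b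
        · have := (sm_fixed_lt hz' j0).mpr h2
          omega
        · have : ¬ z' j0 = (j0 : ℕ) := fun hfix => h2 ((sm_fixed_lt hz' j0).mp hfix)
          omega
  -- c = M
  have hcM : c = M := by
    rcases lt_trichotomy c M with h | h | h
    · exfalso
      have hcn : c < m + m' + 2 := by omega
      have hfix : w ⟨c, hcn⟩ = ((⟨c, hcn⟩ : Fin (m + m' + 2)) : ℕ) := by
        rw [sm_fixed_iff hw]
        intro s hs
        exact key1 s (by simp at hs; omega)
      have := (sm_fixed_lt hw ⟨c, hcn⟩).mp hfix
      simp only at this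
      omega
    · exact h
    · exfalso
      have hMn : M < m + m' + 2 := by omega
      have hfix : w ⟨M, hMn⟩ = ((⟨M, hMn⟩ : Fin (m + m' + 2)) : ℕ) := by
        rw [sm_fixed_lt hw ⟨M, hMn⟩]
        exact h
      exact key2 ⟨⟨M, hMn⟩, hfix⟩
  -- relate strict-inequality filters to fixed-point filters
  have hsplit : ∀ (n : ℕ) (f : Fin n → ℕ), StrictMono f →
      (Finset.univ.filter fun k : Fin n => (k : ℕ) < f k).card
        + (Finset.univ.filter fun k : Fin n => f k = (k : ℕ)).card = n := by
    intro n f hf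
    have heq : (Finset.univ.filter fun k : Fin n => f k = (k : ℕ))
        = (Finset.univ.filter fun k : Fin n => ¬ ((k : ℕ) < f k)) := by
      apply Finset.filter_congr
      intro k _
      have := sm_le hf k
      constructor
      · intro h; omega
      · intro h; omega
    rw [heq, Finset.card_filter_add_card_filter_not]
    simp
  have h1 := hsplit (m + m' + 2) w hw
  have h2 := hsplit (m + 1) z hz
  have h3 := hsplit (m' + 1) z' hz'
  rw [← ha_def] at h2
  rw [← hb_def] at h3
  rw [← hc_def] at h1
  have hgoal1 : (Finset.univ.filter fun k : Fin (m + m' + 2) => (k : ℕ) < w k).card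
      = m + m' + 2 - c := by omega
  have hgoal2 : (Finset.univ.filter fun i : Fin (m + 1) => (i : ℕ) < z i).card
      = m + 1 - a := by omega
  have hgoal3 : (Finset.univ.filter fun j : Fin (m' + 1) => (j : ℕ) < z' j).card
      = m' + 1 - b := by omega
  rw [hgoal1, hgoal2, hgoal3]
  omega
end

section
/- Let F be a field, A and B unital associative F-algebras, M a left A-module and N a left B-module. Then the annihilator of the (A ⊗_F B)-module M ⊗_F N equals Ann_A(M) ⊗_F B + A ⊗_F Ann_B(N). -/
open scoped TensorProduct

/-- Let `F` be a field, `A` and `B` unital associative `F`-algebras, `M` a left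
`A`-module and `N` a left `B`-module.  Then the annihilator of the `(A ⊗[F] B)`-module
`M ⊗[F] N` (with action `(a ⊗ b)·(m ⊗ n) = am ⊗ bn`) equals
`Ann_A(M) ⊗ B + A ⊗ Ann_B(N)`, i.e. the sum of the ideals generated by the images of
`Ann_A(M)` and `Ann_B(N)` under the two inclusions `A, B → A ⊗[F] B`. -/
theorem annihilator_tensor_product {F A B M N : Type*} [Field F]
    [Ring A] [Ring B] [Algebra F A] [Algebra F B]
    [AddCommGroup M] [Module F M] [Module A M] [IsScalarTower F A M]
    [AddCommGroup N] [Module F N] [Module B N] [IsScalarTower F B N]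
    [inst : Module (A ⊗[F] B) (M ⊗[F] N)]
    (hsmul : ∀ (a : A) (b : B) (m : M) (n : N),
      (a ⊗ₜ[F] b) • (m ⊗ₜ[F] n) = (a • m) ⊗ₜ[F] (b • n)) :
    Module.annihilator (A ⊗[F] B) (M ⊗[F] N)
      = Ideal.map (Algebra.TensorProduct.includeLeft : A →ₐ[F] A ⊗[F] B)
          (Module.annihilator A M)
        ⊔ Ideal.map (Algebra.TensorProduct.includeRight : B →ₐ[F] A ⊗[F] B)
          (Module.annihilator B N) := by
  classical
  set I := Module.annihilator A M with hI
  set J := Module.annihilator B N with hJ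
  set RHS := Ideal.map (Algebra.TensorProduct.includeLeft : A →ₐ[F] A ⊗[F] B) I
      ⊔ Ideal.map (Algebra.TensorProduct.includeRight : B →ₐ[F] A ⊗[F] B) J with hRHS
  -- membership of simple tensors in RHS
  have hmemL : ∀ {a : A} (b : B), a ∈ I → a ⊗ₜ[F] b ∈ RHS := by
    intro a b ha
    have h1 : ((a ⊗ₜ[F] (1 : B)) : A ⊗[F] B)
        ∈ Ideal.map (Algebra.TensorProduct.includeLeft : A →ₐ[F] A ⊗[F] B) I :=
      Ideal.mem_map_of_mem _ ha
    have h2 := Ideal.mul_mem_left _ ((1 : A) ⊗ₜ[F] b) h1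
    rw [Algebra.TensorProduct.tmul_mul_tmul, one_mul, mul_one] at h2
    exact Ideal.mem_sup_left h2
  have hmemR : ∀ (a : A) {b : B}, b ∈ J → a ⊗ₜ[F] b ∈ RHS := by
    intro a b hb
    have h1 : (((1 : A) ⊗ₜ[F] b) : A ⊗[F] B)
        ∈ Ideal.map (Algebra.TensorProduct.includeRight : B →ₐ[F] A ⊗[F] B) J :=
      Ideal.mem_map_of_mem _ hb
    have h2 := Ideal.mul_mem_left _ (a ⊗ₜ[F] (1 : B)) h1
    rw [Algebra.TensorProduct.tmul_mul_tmul, one_mul, mul_one] at h2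
    exact Ideal.mem_sup_right h2
  -- simple tensors with one side annihilating kill everything
  have key1 : ∀ (a : A) (b : B), (∀ m : M, a • m = 0) →
      ∀ z : M ⊗[F] N, (a ⊗ₜ[F] b) • z = 0 := by
    intro a b ha z
    induction z using TensorProduct.induction_on with
    | zero => exact smul_zero _
    | tmul m n => rw [hsmul, ha m, TensorProduct.zero_tmul]
    | add u v hu hv => rw [smul_add, hu, hv, add_zero]
  have key2 : ∀ (a : A) (b : B), (∀ n : N, b • n = 0) →
      ∀ z : M ⊗[F] N, (a ⊗ₜ[F] b) • z = 0 := by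
    intro a b hb z
    induction z using TensorProduct.induction_on with
    | zero => exact smul_zero _
    | tmul m n => rw [hsmul, hb n, TensorProduct.tmul_zero]
    | add u v hu hv => rw [smul_add, hu, hv, add_zero]
  -- the easy inclusion
  have hle : RHS ≤ Module.annihilator (A ⊗[F] B) (M ⊗[F] N) := by
    apply sup_le
    · rw [Ideal.map_le_iff_le_comap]
      intro a ha
      rw [Ideal.mem_comap, Module.mem_annihilator]
      exact key1 a 1 (fun m => Module.mem_annihilator.mp ha m)
    · rw [Ideal.map_le_iff_le_comap]
      intro b hb
      rw [Ideal.mem_comap, Module.mem_annihilator]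
      exact key2 1 b (fun n => Module.mem_annihilator.mp hb n)
  refine le_antisymm ?_ hle
  intro x hx
  -- split B as J' ⊕ C
  set J' : Submodule F B := J.restrictScalars F with hJ'
  obtain ⟨C, hC⟩ := J'.exists_isCompl
  set projC : B →ₗ[F] C := C.linearProjOfIsCompl J' hC.symm with hprojC
  set pJ : B →ₗ[F] B := J'.subtype ∘ₗ J'.linearProjOfIsCompl C hC with hpJ
  set pC : B →ₗ[F] B := C.subtype ∘ₗ projC with hpC
  have hid : pJ + pC = LinearMap.id := by
    ext b
    exact Submodule.projection_add_projection_eq_self hC b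
  set xJ := LinearMap.lTensor A pJ x with hxJdef
  set xC := LinearMap.lTensor A pC x with hxCdef
  have hsplit : xJ + xC = x := by
    rw [hxJdef, hxCdef, ← LinearMap.add_apply, ← LinearMap.lTensor_add, hid,
      LinearMap.lTensor_id, LinearMap.id_apply]
  -- xJ lies in RHS
  have hxJ : xJ ∈ RHS := by
    have : ∀ y : A ⊗[F] B, LinearMap.lTensor A pJ y ∈ RHS := by
      intro y
      induction y using TensorProduct.induction_on with
      | zero => rw [map_zero]; exact zero_mem RHS
      | tmul a b =>
        rw [LinearMap.lTensor_tmul]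
        exact hmemR a (J'.linearProjOfIsCompl C hC b).2
      | add u v hu hv => rw [map_add]; exact add_mem hu hv
    exact this x
  -- xC annihilates M ⊗ N
  have hxC : xC ∈ Module.annihilator (A ⊗[F] B) (M ⊗[F] N) := by
    have : xC = x - xJ := by rw [← hsplit, add_sub_cancel_left]
    rw [this]
    exact sub_mem hx (hle hxJ)
  have hxCzero : ∀ z : M ⊗[F] N, xC • z = 0 := fun z =>
    Module.mem_annihilator.mp hxC z
  -- write xC with coefficients along a basis of C
  set c := Module.Basis.ofVectorSpace F C with hc
  set y : A ⊗[F] C := LinearMap.lTensor A projC x with hy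
  have hxCy : xC = LinearMap.lTensor A C.subtype y := by
    rw [hy, hxCdef, hpC, ← LinearMap.lTensor_comp_apply]
  set a : _ →₀ A := TensorProduct.equivFinsuppOfBasisRight c y with ha
  have hyrec : y = a.sum fun k ak => ak ⊗ₜ[F] c k := by
    rw [ha, ← TensorProduct.equivFinsuppOfBasisRight_symm_apply,
      LinearEquiv.symm_apply_apply]
  have hxCsum : xC = a.sum fun k ak => ak ⊗ₜ[F] (c k : B) := by
    rw [hxCy, hyrec, map_finsuppSum]
    simp [LinearMap.lTensor_tmul]
  -- the coefficients annihilate M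
  have hcoef : ∀ k, a k ∈ I := by
    intro k
    by_cases hk : k ∈ a.support
    · rw [hI, Module.mem_annihilator]
      intro m
      rw [← Module.forall_dual_apply_eq_zero_iff F (a k • m)]
      intro f
      -- the auxiliary functional M ⊗ N → N
      set g : M ⊗[F] N →ₗ[F] N :=
        (TensorProduct.lid F N).toLinearMap ∘ₗ (TensorProduct.map f LinearMap.id)
        with hg
      have hgtmul : ∀ (m' : M) (n : N), g (m' ⊗ₜ[F] n) = f m' • n := by
        intro m' n
        simp [hg]
      -- for every n, the element β n of B annihilates n and lies in C
      have hrel : ∀ n : N,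
          (∑ j ∈ a.support, f (a j • m) • ((c j : B))) • n = 0 := by
        intro n
        have h0 : xC • (m ⊗ₜ[F] n) = 0 := hxCzero _
        rw [hxCsum, Finsupp.sum, Finset.sum_smul] at h0
        have h1 : ∑ j ∈ a.support, ((a j • m) ⊗ₜ[F] ((c j : B) • n)) = 0 := by
          rw [← h0]
          exact Finset.sum_congr rfl fun j _ => (hsmul _ _ _ _).symm
        have h2 := congrArg g h1
        rw [map_sum, map_zero] at h2
        simp only [hgtmul] at h2
        rw [Finset.sum_smul]
        rw [← h2]
        exact Finset.sum_congr rfl fun j _ => smul_assoc _ _ _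
      set β : B := ∑ j ∈ a.support, f (a j • m) • ((c j : B)) with hβ
      have hβJ : β ∈ J' := by
        rw [hJ', Submodule.restrictScalars_mem, hJ, Module.mem_annihilator]
        exact hrel
      have hβC : β ∈ C := by
        refine Submodule.sum_mem _ fun j _ => Submodule.smul_mem _ _ (c j).2
      have hβ0 : β = 0 := by
        have := hC.disjoint
        rw [Submodule.disjoint_def] at this
        exact this β hβJ hβC
      -- linear independence of the basis of C
      have hind := c.linearIndependent
      rw [linearIndependent_iff'] at hind
      have hsum0 : (∑ j ∈ a.support, f (a j • m) • c j) = 0 := by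
        apply Subtype.coe_injective
        push_cast
        rw [← hβ]
        exact hβ0
      exact hind a.support (fun j => f (a j • m)) hsum0 k hk
    · rw [Finsupp.notMem_support_iff] at hk
      rw [hk]
      exact zero_mem I
  -- conclude
  have hxCmem : xC ∈ RHS := by
    rw [hxCsum, Finsupp.sum]
    exact sum_mem fun k _ => hmemL _ (hcoef k)
  rw [← hsplit]
  exact add_mem hxJ hxCmem
end

section
/- Let V be a vector space over a field of characteristic zero. Consider the canonical embedding of Λ²(Λ²V) into V⊗V⊗V⊗V. Its image equals the set of tensors R ∈ V^{⊗4} satisfying (12)·R = −R, (34)·R = −R, and (13)(24)·R = −R, where a permutation σ of {1,2,3,4} acts on V^{⊗4} by permuting tensor factors. -/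
open scoped TensorProduct

/-- The action of a permutation `σ` of `{1,2,3,4}` on `V^{⊗4}` by permuting tensor
factors. -/
noncomputable def permAction {F V : Type*} [Field F] [AddCommGroup V] [Module F V]
    (σ : Equiv.Perm (Fin 4)) :
    (⨂[F] _ : Fin 4, V) ≃ₗ[F] (⨂[F] _ : Fin 4, V) :=
  PiTensorProduct.reindex F (fun _ : Fin 4 => V) σ

/-- The image of `(x∧y)∧(z∧t)` under the canonical embedding
`Λ²(Λ²V) → V ⊗ V ⊗ V ⊗ V` (the standard antisymmetrization). -/
noncomputable def lambdaSqLambdaSq {F V : Type*} [Field F] [AddCommGroup V] [Module F V]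
    (x y z t : V) : ⨂[F] _ : Fin 4, V :=
  (PiTensorProduct.tprod F ![x, y, z, t] - PiTensorProduct.tprod F ![y, x, z, t]
    - PiTensorProduct.tprod F ![x, y, t, z] + PiTensorProduct.tprod F ![y, x, t, z])
  - (PiTensorProduct.tprod F ![z, t, x, y] - PiTensorProduct.tprod F ![t, z, x, y]
    - PiTensorProduct.tprod F ![z, t, y, x] + PiTensorProduct.tprod F ![t, z, y, x])

open PiTensorProduct

section Aux

variable {F V : Type*} [Field F] [AddCommGroup V] [Module F V]

lemma permAction_tprod (σ : Equiv.Perm (Fin 4)) (v : Fin 4 → V) :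
    permAction (F := F) σ (tprod F v) = tprod F fun i => v (σ.symm i) :=
  reindex_tprod σ v

lemma permAction_mul (σ τ : Equiv.Perm (Fin 4)) (R : ⨂[F] _ : Fin 4, V) :
    permAction (σ * τ) R = permAction σ (permAction τ R) :=
  (PiTensorProduct.reindex_reindex (s := fun _ : Fin 4 => V) τ σ R).symm

lemma perm_vec (σ : Equiv.Perm (Fin 4)) (p : Fin 4 → Fin 4) (h : ⇑σ.symm = p)
    (x y z t : V) :
    permAction (F := F) σ (tprod F ![x, y, z, t]) =
      tprod F ![![x,y,z,t] (p 0), ![x,y,z,t] (p 1), ![x,y,z,t] (p 2), ![x,y,z,t] (p 3)] := by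
  rw [permAction_tprod]
  congr 1
  funext i
  fin_cases i <;> simp [h]

lemma tprod_eq_vec (v : Fin 4 → V) :
    (tprod F v : ⨂[F] _ : Fin 4, V) = tprod F ![v 0, v 1, v 2, v 3] := by
  congr 1
  funext i
  fin_cases i <;> rfl

lemma perm_a (x y z t : V) :
    permAction (F := F) (Equiv.swap (0:Fin 4) 1) (tprod F ![x,y,z,t]) = tprod F ![y,x,z,t] :=
  perm_vec _ ![1,0,2,3] (by decide) x y z t

lemma perm_b (x y z t : V) :
    permAction (F := F) (Equiv.swap (2:Fin 4) 3) (tprod F ![x,y,z,t]) = tprod F ![x,y,t,z] :=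
  perm_vec _ ![0,1,3,2] (by decide) x y z t

lemma perm_c (x y z t : V) :
    permAction (F := F) (Equiv.swap (0:Fin 4) 2 * Equiv.swap (1:Fin 4) 3)
      (tprod F ![x,y,z,t]) = tprod F ![z,t,x,y] :=
  perm_vec _ ![2,3,0,1] (by decide) x y z t

lemma perm_ab (x y z t : V) :
    permAction (F := F) (Equiv.swap (0:Fin 4) 1 * Equiv.swap (2:Fin 4) 3)
      (tprod F ![x,y,z,t]) = tprod F ![y,x,t,z] :=
  perm_vec _ ![1,0,3,2] (by decide) x y z t

lemma perm_ac (x y z t : V) :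
    permAction (F := F)
      (Equiv.swap (0:Fin 4) 1 * (Equiv.swap (0:Fin 4) 2 * Equiv.swap (1:Fin 4) 3))
      (tprod F ![x,y,z,t]) = tprod F ![t,z,x,y] :=
  perm_vec _ ![3,2,0,1] (by decide) x y z t

lemma perm_ca (x y z t : V) :
    permAction (F := F)
      ((Equiv.swap (0:Fin 4) 2 * Equiv.swap (1:Fin 4) 3) * Equiv.swap (0:Fin 4) 1)
      (tprod F ![x,y,z,t]) = tprod F ![z,t,y,x] :=
  perm_vec _ ![2,3,1,0] (by decide) x y z t

lemma perm_abc (x y z t : V) :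
    permAction (F := F)
      (Equiv.swap (0:Fin 4) 1 * Equiv.swap (2:Fin 4) 3 *
        (Equiv.swap (0:Fin 4) 2 * Equiv.swap (1:Fin 4) 3))
      (tprod F ![x,y,z,t]) = tprod F ![t,z,y,x] :=
  perm_vec _ ![3,2,1,0] (by decide) x y z t

lemma gen_a (x y z t : V) :
    permAction (F := F) (Equiv.swap (0:Fin 4) 1) (lambdaSqLambdaSq x y z t)
      = -(lambdaSqLambdaSq x y z t) := by
  simp only [lambdaSqLambdaSq, map_sub, map_add, perm_a]
  abel

lemma gen_b (x y z t : V) :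
    permAction (F := F) (Equiv.swap (2:Fin 4) 3) (lambdaSqLambdaSq x y z t)
      = -(lambdaSqLambdaSq x y z t) := by
  simp only [lambdaSqLambdaSq, map_sub, map_add, perm_b]
  abel

lemma gen_c (x y z t : V) :
    permAction (F := F) (Equiv.swap (0:Fin 4) 2 * Equiv.swap (1:Fin 4) 3)
      (lambdaSqLambdaSq x y z t) = -(lambdaSqLambdaSq x y z t) := by
  simp only [lambdaSqLambdaSq, map_sub, map_add, perm_c]
  abel

end Aux

/-- Over a field of characteristic zero, the image of the canonical embedding
`Λ²(Λ²V) → V^{⊗4}` (the span of the antisymmetrizations of `(x∧y)∧(z∧t)`) equals the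
set of tensors `R` with `(12)·R = −R`, `(34)·R = −R` and `(13)(24)·R = −R`. -/
theorem lambdaSqLambdaSq_image_eq {F V : Type*} [Field F] [CharZero F]
    [AddCommGroup V] [Module F V] :
    (Submodule.span F {R : ⨂[F] _ : Fin 4, V |
        ∃ x y z t : V, R = lambdaSqLambdaSq x y z t} : Set (⨂[F] _ : Fin 4, V))
      = {R : ⨂[F] _ : Fin 4, V |
          permAction (Equiv.swap (0 : Fin 4) 1) R = -R ∧
          permAction (Equiv.swap (2 : Fin 4) 3) R = -R ∧
          permAction (Equiv.swap (0 : Fin 4) 2 * Equiv.swap (1 : Fin 4) 3) R = -R} := by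
  set a : Equiv.Perm (Fin 4) := Equiv.swap 0 1 with ha
  set b : Equiv.Perm (Fin 4) := Equiv.swap 2 3 with hb
  set c : Equiv.Perm (Fin 4) := Equiv.swap 0 2 * Equiv.swap 1 3 with hc
  set M : Submodule F (⨂[F] _ : Fin 4, V) :=
    Submodule.span F {R : ⨂[F] _ : Fin 4, V |
        ∃ x y z t : V, R = lambdaSqLambdaSq x y z t} with hM
  -- the averaging linear map
  set Φ : (⨂[F] _ : Fin 4, V) →ₗ[F] (⨂[F] _ : Fin 4, V) :=
    LinearMap.id - (permAction (F := F) (V := V) a).toLinearMap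
      - (permAction b).toLinearMap + (permAction (a * b)).toLinearMap
      - (permAction c).toLinearMap + (permAction (a * c)).toLinearMap
      + (permAction (c * a)).toLinearMap - (permAction (a * b * c)).toLinearMap with hΦ
  have Φ_apply : ∀ R : ⨂[F] _ : Fin 4, V,
      Φ R = R - permAction a R - permAction b R + permAction (a * b) R
        - permAction c R + permAction (a * c) R + permAction (c * a) R
        - permAction (a * b * c) R := by
    intro R
    simp [hΦ, LinearMap.sub_apply, LinearMap.add_apply]
  have claim1 : ∀ v : Fin 4 → V, Φ (tprod F v) ∈ M := by
    intro v
    refine Submodule.subset_span ⟨v 0, v 1, v 2, v 3, ?_⟩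
    rw [Φ_apply, tprod_eq_vec v, ha, hb, hc]
    rw [perm_a, perm_b, perm_c, perm_ab, perm_ac, perm_ca, perm_abc]
    rw [lambdaSqLambdaSq]
    abel
  have claim2 : ∀ R : ⨂[F] _ : Fin 4, V, Φ R ∈ M := by
    intro R
    have hR : R ∈ Submodule.span F
        (Set.range (tprod F (s := fun _ : Fin 4 => V))) := by
      rw [PiTensorProduct.span_tprod_eq_top]; exact Submodule.mem_top
    induction hR using Submodule.span_induction with
    | mem y hy => obtain ⟨v, rfl⟩ := hy; exact claim1 v
    | zero => simp
    | add y z _ _ hy hz => rw [map_add]; exact M.add_mem hy hz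
    | smul r y _ hy => rw [map_smul]; exact M.smul_mem r hy
  ext R
  simp only [SetLike.mem_coe, Set.mem_setOf_eq]
  constructor
  · intro hR
    induction hR using Submodule.span_induction with
    | mem y hy =>
        obtain ⟨x, y, z, t, rfl⟩ := hy
        exact ⟨gen_a x y z t, gen_b x y z t, gen_c x y z t⟩
    | zero => refine ⟨?_, ?_, ?_⟩ <;> simp
    | add y z _ _ hy hz =>
        refine ⟨?_, ?_, ?_⟩ <;>
          · rw [map_add, neg_add]
            first
            | rw [hy.1, hz.1]
            | rw [hy.2.1, hz.2.1]
            | rw [hy.2.2, hz.2.2]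
    | smul r y _ hy =>
        exact ⟨by rw [map_smul, hy.1, smul_neg], by rw [map_smul, hy.2.1, smul_neg],
          by rw [map_smul, hy.2.2, smul_neg]⟩
  · rintro ⟨h1, h2, h3⟩
    have eab : permAction (a * b) R = R := by
      rw [permAction_mul, h2, map_neg, h1, neg_neg]
    have eac : permAction (a * c) R = R := by
      rw [permAction_mul, h3, map_neg, h1, neg_neg]
    have eca : permAction (c * a) R = R := by
      rw [permAction_mul, h1, map_neg, h3, neg_neg]
    have eabc : permAction (a * b * c) R = -R := by
      rw [permAction_mul, h3, map_neg, eab]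
    have key : Φ R = (8 : F) • R := by
      rw [Φ_apply, h1, h2, h3, eab, eac, eca, eabc]
      module
    have h8 : (8 : F) ≠ 0 := by norm_num
    have : R = (8 : F)⁻¹ • Φ R := by
      rw [key, smul_smul, inv_mul_cancel₀ h8, one_smul]
    rw [this]
    exact M.smul_mem _ (claim2 R)
end

section
/- Let w = (w₁, …, w_N) be a finite sequence of distinct elements of a linearly ordered set, and let λ be the common shape of the pair of standard Young tableaux produced by the Robinson–Schensted insertion algorithm applied to w. Then the number of rows of λ equals the length of a longest strictly decreasing subsequence of w. -/
/-!
Inserting a word `w` into the first row leaves that row together with the word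
`bumpWord [] w` of entries bumped out of it, and the lower rows of `RSTableau w` form the
insertion tableau of `bumpWord [] w`. By induction on the length it therefore suffices that a
longest strictly decreasing subsequence of a nonempty `w` is one longer than one of
`bumpWord [] w`.

A decreasing sequence `b₁ > ⋯ > bₖ` of bumped entries lifts to `w`: an entry bumped by a letter
`z` exceeds `z`, while an entry still in the row and below the bumped one is at most `z`, so
every step is realised by a bumping letter or by the next bumped entry itself, and the letter
`b₁` in front gives length `k + 1`. Conversely, along a decreasing subsequence
`x₀ > x₁ > ⋯ > xₖ` of `w` one tracks an entry `v` of the row above the rest of the chain. Each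
`xᵢ` forces a bump at most `v` and above all later ones: the entry bumped by `xᵢ` itself, or `v`
when a letter below `xᵢ` evicts it first (a letter between `xᵢ` and `v` takes over the role of
`v`). This gives `k` decreasing bumps.
-/

variable {α : Type*} [LinearOrder α]

/-- Schensted row insertion: insert `x` into a row, returning the new row and the
bumped element (if any). -/
def rowInsert : List α → α → List α × Option α
  | [], x => ([x], none)
  | a :: as, x =>
    if x < a then (x :: as, some a)
    else
      let r := rowInsert as x
      (a :: r.1, r.2)

/-- Schensted insertion of an entry into a tableau (given as its list of rows),
recursively bumping entries into lower rows. -/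
def tabInsert : List (List α) → α → List (List α)
  | [], x => [[x]]
  | r :: rs, x =>
    match rowInsert r x with
    | (r', none) => r' :: rs
    | (r', some b) => r' :: tabInsert rs b

/-- The Robinson–Schensted insertion tableau of a word `w`, given as its list of rows;
its shape is the common shape `λ` of the pair `(P, Q)` of standard Young tableaux
produced by the Robinson–Schensted algorithm. -/
def RSTableau (w : List α) : List (List α) := w.foldl tabInsert []

theorem rowInsert_cases (r : List α) (z : α) :
    (rowInsert r z = (r ++ [z], none) ∧ ∀ e ∈ r, e ≤ z) ∨
    ∃ p b q, r = p ++ b :: q ∧ rowInsert r z = (p ++ z :: q, some b) ∧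
      (∀ e ∈ p, e ≤ z) ∧ z < b := by
  induction r with
  | nil => exact Or.inl ⟨rfl, by simp⟩
  | cons a r ih =>
    by_cases hza : z < a
    · exact Or.inr ⟨[], a, r, rfl, by simp [rowInsert, hza], by simp, hza⟩
    have hcons : rowInsert (a :: r) z = (a :: (rowInsert r z).1, (rowInsert r z).2) := by
      simp [rowInsert, hza]
    rcases ih with ⟨h, hle⟩ | ⟨p, b, q, rfl, h, hp, hzb⟩
    · refine Or.inl ⟨by simp [hcons, h], ?_⟩
      simpa [not_lt.1 hza] using hle
    · refine Or.inr ⟨a :: p, b, q, rfl, by simp [hcons, h], ?_, hzb⟩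
      simpa [not_lt.1 hza] using hp

section rowInsert

variable {r : List α} {z b c : α}

theorem pairwise_rowInsert_fst (hr : r.Pairwise (· ≤ ·)) (z : α) :
    (rowInsert r z).1.Pairwise (· ≤ ·) := by
  rcases rowInsert_cases r z with ⟨h, hle⟩ | ⟨p, b, q, rfl, h, hp, hzb⟩ <;> rw [h]
  · simpa [List.pairwise_append, hr] using hle
  · simp only [List.pairwise_append, List.pairwise_cons, List.mem_cons] at hr ⊢
    refine ⟨hr.1, ⟨fun e he => hzb.le.trans (hr.2.1.1 e he), hr.2.1.2⟩, ?_⟩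
    rintro a ha e (rfl | he)
    exacts [hp a ha, hr.2.2 a ha e (Or.inr he)]

theorem mem_rowInsert_fst_self (r : List α) (z : α) : z ∈ (rowInsert r z).1 := by
  rcases rowInsert_cases r z with ⟨h, -⟩ | ⟨p, b, q, rfl, h, -⟩ <;> simp [h]

theorem mem_of_mem_rowInsert_fst (hc : c ∈ (rowInsert r z).1) : c = z ∨ c ∈ r := by
  rcases rowInsert_cases r z with ⟨h, -⟩ | ⟨p, b, q, rfl, h, -⟩ <;> simp [h] at hc ⊢ <;>
    tauto

theorem mem_rowInsert_fst_of_mem (hc : c ∈ r) (hb : (rowInsert r z).2 ≠ some c) :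
    c ∈ (rowInsert r z).1 := by
  rcases rowInsert_cases r z with ⟨h, -⟩ | ⟨p, b, q, rfl, h, -⟩ <;> simp [h] at hb hc ⊢
  · exact Or.inl hc
  · tauto

theorem mem_of_rowInsert_eq_some (hb : (rowInsert r z).2 = some b) : b ∈ r := by
  rcases rowInsert_cases r z with ⟨h, -⟩ | ⟨p, b', q, rfl, h, -⟩ <;> simp [h] at hb
  simp [hb]

theorem lt_of_rowInsert_eq_some (hb : (rowInsert r z).2 = some b) : z < b := by
  rcases rowInsert_cases r z with ⟨h, -⟩ | ⟨p, b', q, rfl, h, -, hzb⟩ <;> simp [h] at hb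
  exact hb ▸ hzb

theorem exists_rowInsert_eq_some (hc : c ∈ r) (hzc : z < c) :
    ∃ b, (rowInsert r z).2 = some b := by
  rcases rowInsert_cases r z with ⟨-, hle⟩ | ⟨p, b, q, -, h, -⟩
  · exact absurd (hle c hc) (not_le.2 hzc)
  · exact ⟨b, by simp [h]⟩

theorem rowInsert_bump_le (hr : r.Pairwise (· ≤ ·)) (hb : (rowInsert r z).2 = some b)
    (hc : c ∈ r) (hzc : z < c) : b ≤ c := by
  rcases rowInsert_cases r z with ⟨h, -⟩ | ⟨p, b', q, rfl, h, hp, -⟩ <;> simp [h] at hb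
  subst hb
  simp only [List.pairwise_append, List.pairwise_cons, List.mem_append, List.mem_cons] at hr hc
  rcases hc with hc | rfl | hc
  exacts [absurd (hp c hc) (not_le.2 hzc), le_rfl, hr.2.1.1 c hc]

theorem le_of_mem_rowInsert_fst (hr : r.Pairwise (· ≤ ·)) (hb : (rowInsert r z).2 = some b)
    (hc : c ∈ (rowInsert r z).1) (hcb : c < b) : c ≤ z := by
  rcases rowInsert_cases r z with ⟨h, -⟩ | ⟨p, b', q, rfl, h, hp, -⟩ <;> simp [h] at hb hc
  subst hb
  simp only [List.pairwise_append, List.pairwise_cons] at hr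
  rcases hc with hc | rfl | hc
  exacts [hp c hc, le_rfl, absurd (hr.2.1.1 c hc) (not_le.2 hcb)]

end rowInsert

def bumpWord : List α → List α → List α
  | _, [] => []
  | r, z :: u => (rowInsert r z).2.toList ++ bumpWord (rowInsert r z).1 u

section bumpWord

variable {r u : List α} {z b : α}

theorem bumpWord_cons_of_eq_some (hb : (rowInsert r z).2 = some b) :
    bumpWord r (z :: u) = b :: bumpWord (rowInsert r z).1 u := by
  simp [bumpWord, hb]

theorem sublist_bumpWord_cons (r : List α) (z : α) (u : List α) :
    (bumpWord (rowInsert r z).1 u).Sublist (bumpWord r (z :: u)) :=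
  List.sublist_append_right _ _

theorem length_bumpWord_le (r u : List α) : (bumpWord r u).length ≤ u.length := by
  induction u generalizing r with
  | nil => simp [bumpWord]
  | cons z u ih =>
    simp only [bumpWord, List.length_append, List.length_cons]
    have := ih (rowInsert r z).1
    have : (rowInsert r z).2.toList.length ≤ 1 := Option.length_toList_le
    omega

theorem exists_foldl_tabInsert_cons (r : List α) (t : List (List α)) (u : List α) :
    ∃ r', u.foldl tabInsert (r :: t) = r' :: (bumpWord r u).foldl tabInsert t := by
  induction u generalizing r t with
  | nil => exact ⟨r, rfl⟩
  | cons z u ih =>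
    rcases h : rowInsert r z with ⟨r', _ | b⟩
    · simpa [tabInsert, bumpWord, h] using ih r' t
    · simpa [tabInsert, bumpWord, h] using ih r' (tabInsert t b)

theorem length_RSTableau_cons (z : α) (u : List α) :
    (RSTableau (z :: u)).length = (RSTableau (bumpWord [] (z :: u))).length + 1 := by
  obtain ⟨r', h⟩ := exists_foldl_tabInsert_cons [] [] (z :: u)
  have hrow : RSTableau (z :: u) = (z :: u).foldl tabInsert [[]] := rfl
  rw [hrow, h]
  rfl

end bumpWord

def decreasingSublistLengths (w : List α) : Set ℕ :=
  {n | ∃ l : List α, l.Sublist w ∧ l.IsChain (· > ·) ∧ l.length = n}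

def HasDecreasingSublistLE (l : List α) (n : ℕ) (v : α) : Prop :=
  ∃ bs : List α, bs.Sublist l ∧ bs.Pairwise (· > ·) ∧ bs.length = n ∧
    ∀ e ∈ bs, e ≤ v

namespace HasDecreasingSublistLE

variable {l l' : List α} {n : ℕ} {v v' b : α}

theorem nil (l : List α) (v : α) : HasDecreasingSublistLE l 0 v :=
  ⟨[], List.nil_sublist l, .nil, rfl, by simp⟩

theorem mono (h : HasDecreasingSublistLE l n v) (hl : l.Sublist l') (hv : v ≤ v') :
    HasDecreasingSublistLE l' n v' :=
  let ⟨bs, hbs, hdec, hlen, hle⟩ := h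
  ⟨bs, hbs.trans hl, hdec, hlen, fun e he => (hle e he).trans hv⟩

theorem singleton (l : List α) (b : α) : HasDecreasingSublistLE (b :: l) 1 b :=
  ⟨[b], (List.nil_sublist l).cons_cons b, List.pairwise_singleton _ b, rfl, by simp⟩

theorem cons (h : HasDecreasingSublistLE l n v) (hvb : v < b) :
    HasDecreasingSublistLE (b :: l) (n + 1) b := by
  obtain ⟨bs, hbs, hdec, hlen, hle⟩ := h
  refine ⟨b :: bs, hbs.cons_cons b, List.pairwise_cons.2 ⟨fun e he => ?_, hdec⟩,
    by simp [hlen], ?_⟩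
  · exact (hle e he).trans_lt hvb
  · simpa using fun e he => ((hle e he).trans_lt hvb).le

theorem mem_decreasingSublistLengths (h : HasDecreasingSublistLE l n v) :
    n ∈ decreasingSublistLengths l :=
  let ⟨bs, hbs, hdec, hlen, _⟩ := h
  ⟨bs, hbs, List.isChain_iff_pairwise.2 hdec, hlen⟩

end HasDecreasingSublistLE

theorem hasDecreasingSublistLE_of_sublist_bumpWord {r u bs : List α} {b : α}
    (hr : r.Pairwise (· ≤ ·)) (hdec : (b :: bs).Pairwise (· > ·))
    (hsub : (b :: bs).Sublist (bumpWord r u)) :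
    (∃ c < b, HasDecreasingSublistLE u (bs.length + 1) c) ∧
      (b ∉ r → HasDecreasingSublistLE u (bs.length + 2) b) := by
  induction u generalizing r b bs with
  | nil => simp [bumpWord] at hsub
  | cons z u ih =>
    have hr' := pairwise_rowInsert_fst hr z
    have hu := List.sublist_cons_self z u
    have hpass (h : (b :: bs).Sublist (bumpWord (rowInsert r z).1 u)) :
        (∃ c < b, HasDecreasingSublistLE (z :: u) (bs.length + 1) c) ∧
          (b ∉ r → HasDecreasingSublistLE (z :: u) (bs.length + 2) b) := by
      obtain ⟨⟨c, hcb, hc⟩, hnew⟩ := ih hr' hdec h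
      refine ⟨⟨c, hcb, hc.mono hu le_rfl⟩, fun hbr => ?_⟩
      rcases eq_or_ne b z with rfl | hbz
      · exact hc.cons hcb
      · exact (hnew fun hb => (mem_of_mem_rowInsert_fst hb).elim hbz hbr).mono hu le_rfl
    cases hb₀ : (rowInsert r z).2 with
    | none => exact hpass (by simpa [bumpWord, hb₀] using hsub)
    | some b₀ =>
      rw [bumpWord_cons_of_eq_some hb₀] at hsub
      rcases List.sublist_cons_iff.1 hsub with h | ⟨_, heq, hbs⟩
      · exact hpass h
      obtain ⟨rfl, rfl⟩ := List.cons_eq_cons.1 heq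
      have hzb := lt_of_rowInsert_eq_some hb₀
      refine ⟨?_, absurd (mem_of_rowInsert_eq_some hb₀)⟩
      rcases bs with _ | ⟨b₂, bs⟩
      · exact ⟨z, hzb, HasDecreasingSublistLE.singleton u z⟩
      have hb₂ : b₂ < b := List.rel_of_pairwise_cons hdec List.mem_cons_self
      obtain ⟨⟨c, hcb₂, hc⟩, hnew⟩ := ih hr' hdec.of_cons hbs
      by_cases hmem : b₂ ∈ (rowInsert r z).1
      · -- `b₂` was not bumped yet, so it sits left of `z` in the row
        have hb₂z := le_of_mem_rowInsert_fst hr hb₀ hmem hb₂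
        exact ⟨z, hzb, hc.cons (hcb₂.trans_le hb₂z)⟩
      · exact ⟨b₂, hb₂, (hnew hmem).mono hu le_rfl⟩

theorem hasDecreasingSublistLE_bumpWord {r u xs : List α} {v : α}
    (hr : r.Pairwise (· ≤ ·)) (hdec : (v :: xs).Pairwise (· > ·))
    (hsrc : v ∈ r ∧ xs.Sublist u ∨ (v :: xs).Sublist u) :
    HasDecreasingSublistLE (bumpWord r u) xs.length v := by
  induction u generalizing r v xs with
  | nil =>
    rcases hsrc with ⟨-, hxs⟩ | hxs
    · simpa [List.sublist_nil.1 hxs] using HasDecreasingSublistLE.nil _ v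
    · simp at hxs
  | cons z u ih =>
    have hr' := pairwise_rowInsert_fst hr z
    have hself := mem_rowInsert_fst_self r z
    have hsub := sublist_bumpWord_cons r z u
    rcases hsrc with ⟨hv, hxs⟩ | hvxs
    · rcases xs with _ | ⟨x, xs⟩
      · exact HasDecreasingSublistLE.nil _ v
      have hxv : x < v := List.rel_of_pairwise_cons hdec List.mem_cons_self
      by_cases hxz : x = z
      · subst hxz
        obtain ⟨b, hb⟩ := exists_rowInsert_eq_some hv hxv
        have := ih hr' hdec.of_cons (Or.inl ⟨hself, List.cons_sublist_cons.1 hxs⟩)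
        rw [bumpWord_cons_of_eq_some hb]
        exact (this.cons (lt_of_rowInsert_eq_some hb)).mono (.refl _)
          (rowInsert_bump_le hr hb hv hxv)
      have hxs' : (x :: xs).Sublist u := by
        rcases List.sublist_cons_iff.1 hxs with h | ⟨_, heq, -⟩
        exacts [h, absurd (List.cons_eq_cons.1 heq).1 hxz]
      by_cases hbv : (rowInsert r z).2 = some v
      · rcases lt_or_gt_of_ne hxz with hxz | hzx
        · -- `z` takes over from the bumped `v` as the entry above the chain
          exact (ih hr' (hdec.of_cons.cons_cons_of_trans hxz) (Or.inl ⟨hself, hxs'⟩)).mono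
            hsub (lt_of_rowInsert_eq_some hbv).le
        · rw [bumpWord_cons_of_eq_some hbv]
          exact (ih hr' hdec.of_cons (Or.inr hxs')).cons hxv
      · exact (ih hr' hdec (Or.inl ⟨mem_rowInsert_fst_of_mem hv hbv, hxs'⟩)).mono
          hsub le_rfl
    · refine HasDecreasingSublistLE.mono ?_ hsub le_rfl
      rcases List.sublist_cons_iff.1 hvxs with h | ⟨_, heq, h⟩
      · exact ih hr' hdec (Or.inr h)
      · obtain ⟨rfl, rfl⟩ := List.cons_eq_cons.1 heq
        exact ih hr' hdec (Or.inl ⟨hself, h⟩)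

theorem succ_mem_decreasingSublistLengths {n : ℕ} {z : α} {u : List α}
    (h : n ∈ decreasingSublistLengths (bumpWord [] (z :: u))) :
    n + 1 ∈ decreasingSublistLengths (z :: u) := by
  obtain ⟨_ | ⟨b, bs⟩, hsub, hdec, rfl⟩ := h
  · exact (HasDecreasingSublistLE.singleton u z).mem_decreasingSublistLengths
  · exact ((hasDecreasingSublistLE_of_sublist_bumpWord .nil (List.isChain_iff_pairwise.1 hdec)
      hsub).2 List.not_mem_nil).mem_decreasingSublistLengths

theorem mem_decreasingSublistLengths_bumpWord {n : ℕ} {w : List α}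
    (h : n + 1 ∈ decreasingSublistLengths w) :
    n ∈ decreasingSublistLengths (bumpWord [] w) := by
  obtain ⟨_ | ⟨x, xs⟩, hsub, hdec, hlen⟩ := h
  · simp at hlen
  · simp only [List.length_cons, Nat.add_right_cancel_iff] at hlen
    exact hlen ▸ (hasDecreasingSublistLE_bumpWord .nil (List.isChain_iff_pairwise.1 hdec)
      (Or.inr hsub)).mem_decreasingSublistLengths

theorem isGreatest_decreasingSublistLengths :
    ∀ w : List α, IsGreatest (decreasingSublistLengths w) (RSTableau w).length
  | [] => ⟨⟨[], .slnil, .nil, rfl⟩, by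
      rintro n ⟨l, hl, -, rfl⟩
      simp [List.sublist_nil.1 hl]⟩
  | z :: u => by
    have ih := isGreatest_decreasingSublistLengths (bumpWord [] (z :: u))
    rw [length_RSTableau_cons]
    refine ⟨succ_mem_decreasingSublistLengths ih.1, ?_⟩
    rintro (_ | n) hn
    · exact Nat.zero_le _
    · exact Nat.succ_le_succ (ih.2 (mem_decreasingSublistLengths_bumpWord hn))
termination_by w => w.length
decreasing_by exact (length_bumpWord_le [z] u).trans_lt (Nat.lt_succ_self _)

theorem rows_RS_eq_longest_decreasing_general (w : List α) :
    IsGreatest {n : ℕ | ∃ l : List α, l.Sublist w ∧ l.Chain' (· > ·) ∧ l.length = n}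
      (RSTableau w).length :=
  isGreatest_decreasingSublistLengths w

/-- Schensted's theorem (dual form): for a finite sequence `w` of distinct elements of
a linearly ordered set, the number of rows of the common shape of the pair of standard
Young tableaux produced by Robinson–Schensted insertion equals the length of a longest
strictly decreasing subsequence of `w`. -/
theorem rows_RS_eq_longest_decreasing (w : List α) (hw : w.Nodup) :
    IsGreatest {n : ℕ | ∃ l : List α, l.Sublist w ∧ l.Chain' (· > ·) ∧ l.length = n}
      (RSTableau w).length :=
  rows_RS_eq_longest_decreasing_general w
end
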